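/- arXiv:1812.09539 — 3 statements merged into one kernel-verified Lean document; each statement's English description precedes it below -/
import Mathlib

section
/- If A is a braided commutative braided Hopf algebra, then the adjoint coaction commutes with the antipode: ad ∘ S = (S ⊗ id) ∘ ad. -/
open TensorProduct LinearMap

set_option maxHeartbeats 1000000

noncomputable section

variable (k A : Type*) [Field k] [AddCommGroup A] [Module k A]

/-- A braided Hopf algebra: an algebra with comultiplication, unit, counit, invertible
antipode and an invertible braiding, satisfying the axioms of a Hopf algebra object in a
braided monoidal category. -/
structure BraidedHopfAlgebra where
  mul : A ⊗[k] A →ₗ[k] A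
  unit : k →ₗ[k] A
  comul : A →ₗ[k] A ⊗[k] A
  counit : A →ₗ[k] k
  antipode : A →ₗ[k] A
  antipodeInv : A →ₗ[k] A
  braiding : A ⊗[k] A →ₗ[k] A ⊗[k] A
  braidingInv : A ⊗[k] A →ₗ[k] A ⊗[k] A
  mul_assoc' : mul ∘ₗ rTensor A mul =
    (mul ∘ₗ lTensor A mul) ∘ₗ (TensorProduct.assoc k A A A).toLinearMap
  one_mul' : mul ∘ₗ rTensor A unit = (TensorProduct.lid k A).toLinearMap
  mul_one' : mul ∘ₗ lTensor A unit = (TensorProduct.rid k A).toLinearMap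
  comul_coassoc : rTensor A comul ∘ₗ comul =
    (TensorProduct.assoc k A A A).symm.toLinearMap ∘ₗ lTensor A comul ∘ₗ comul
  counit_comul :
    (TensorProduct.lid k A).toLinearMap ∘ₗ rTensor A counit ∘ₗ comul = LinearMap.id
  comul_counit :
    (TensorProduct.rid k A).toLinearMap ∘ₗ lTensor A counit ∘ₗ comul = LinearMap.id
  antipode_left : mul ∘ₗ rTensor A antipode ∘ₗ comul = unit ∘ₗ counit
  antipode_right : mul ∘ₗ lTensor A antipode ∘ₗ comul = unit ∘ₗ counit
  antipode_inv_left : antipode ∘ₗ antipodeInv = LinearMap.id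
  antipode_inv_right : antipodeInv ∘ₗ antipode = LinearMap.id
  braiding_inv_left : braiding ∘ₗ braidingInv = LinearMap.id
  braiding_inv_right : braidingInv ∘ₗ braiding = LinearMap.id
  yang_baxter :
    rTensor A braiding ∘ₗ
      ((TensorProduct.assoc k A A A).symm.toLinearMap ∘ₗ lTensor A braiding ∘ₗ
        (TensorProduct.assoc k A A A).toLinearMap) ∘ₗ rTensor A braiding =
    ((TensorProduct.assoc k A A A).symm.toLinearMap ∘ₗ lTensor A braiding ∘ₗ
        (TensorProduct.assoc k A A A).toLinearMap) ∘ₗ rTensor A braiding ∘ₗ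
      (TensorProduct.assoc k A A A).symm.toLinearMap ∘ₗ lTensor A braiding ∘ₗ
        (TensorProduct.assoc k A A A).toLinearMap
  mul_braiding : braiding ∘ₗ rTensor A mul =
    lTensor A mul ∘ₗ (TensorProduct.assoc k A A A).toLinearMap ∘ₗ rTensor A braiding ∘ₗ
      (TensorProduct.assoc k A A A).symm.toLinearMap ∘ₗ lTensor A braiding ∘ₗ
      (TensorProduct.assoc k A A A).toLinearMap
  braiding_mul : braiding ∘ₗ lTensor A mul =
    rTensor A mul ∘ₗ (TensorProduct.assoc k A A A).symm.toLinearMap ∘ₗ lTensor A braiding ∘ₗ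
      (TensorProduct.assoc k A A A).toLinearMap ∘ₗ rTensor A braiding ∘ₗ
      (TensorProduct.assoc k A A A).symm.toLinearMap
  comul_braiding : lTensor A comul ∘ₗ braiding =
    (TensorProduct.assoc k A A A).toLinearMap ∘ₗ rTensor A braiding ∘ₗ
      (TensorProduct.assoc k A A A).symm.toLinearMap ∘ₗ lTensor A braiding ∘ₗ
      (TensorProduct.assoc k A A A).toLinearMap ∘ₗ rTensor A comul
  braiding_comul : rTensor A comul ∘ₗ braiding =
    (TensorProduct.assoc k A A A).symm.toLinearMap ∘ₗ lTensor A braiding ∘ₗ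
      (TensorProduct.assoc k A A A).toLinearMap ∘ₗ rTensor A braiding ∘ₗ
      (TensorProduct.assoc k A A A).symm.toLinearMap ∘ₗ lTensor A comul
  comul_mul : comul ∘ₗ mul =
    TensorProduct.map mul mul ∘ₗ
      (TensorProduct.assoc k A A (A ⊗[k] A)).symm.toLinearMap ∘ₗ
      lTensor A ((TensorProduct.assoc k A A A).toLinearMap ∘ₗ rTensor A braiding ∘ₗ
        (TensorProduct.assoc k A A A).symm.toLinearMap) ∘ₗ
      (TensorProduct.assoc k A A (A ⊗[k] A)).toLinearMap ∘ₗ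
      TensorProduct.map comul comul
  comul_unit : comul ∘ₗ unit =
    TensorProduct.map unit unit ∘ₗ (TensorProduct.lid k k).symm.toLinearMap
  counit_mul : counit ∘ₗ mul =
    (TensorProduct.lid k k).toLinearMap ∘ₗ TensorProduct.map counit counit
  counit_unit : counit ∘ₗ unit = LinearMap.id
  antipode_mul : antipode ∘ₗ mul = mul ∘ₗ braiding ∘ₗ TensorProduct.map antipode antipode
  comul_antipode :
    comul ∘ₗ antipode = TensorProduct.map antipode antipode ∘ₗ braiding ∘ₗ comul
  braiding_antipode_left : braiding ∘ₗ rTensor A antipode = lTensor A antipode ∘ₗ braiding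
  braiding_antipode_right : braiding ∘ₗ lTensor A antipode = rTensor A antipode ∘ₗ braiding

variable {k A}

/-- The adjoint coaction ad = (id ⊗ μ)(Ψ ⊗ id)(S ⊗ Δ)Δ. -/
def BraidedHopfAlgebra.ad (H : BraidedHopfAlgebra k A) : A →ₗ[k] A ⊗[k] A :=
  lTensor A H.mul ∘ₗ (TensorProduct.assoc k A A A).toLinearMap ∘ₗ
    rTensor A H.braiding ∘ₗ (TensorProduct.assoc k A A A).symm.toLinearMap ∘ₗ
    TensorProduct.map H.antipode H.comul ∘ₗ H.comul

/-- The middle braiding (id ⊗ Ψ ⊗ id) on (A ⊗ A) ⊗ (A ⊗ A). -/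
def BraidedHopfAlgebra.midBraid (H : BraidedHopfAlgebra k A) :
    (A ⊗[k] A) ⊗[k] (A ⊗[k] A) →ₗ[k] (A ⊗[k] A) ⊗[k] (A ⊗[k] A) :=
  (TensorProduct.assoc k A A (A ⊗[k] A)).symm.toLinearMap ∘ₗ
    lTensor A ((TensorProduct.assoc k A A A).toLinearMap ∘ₗ rTensor A H.braiding ∘ₗ
      (TensorProduct.assoc k A A A).symm.toLinearMap) ∘ₗ
    (TensorProduct.assoc k A A (A ⊗[k] A)).toLinearMap

/-- Braided commutativity: (id ⊗ μ)(Ψ ⊗ id)(id ⊗ ad)Ψ = (id ⊗ μ)(ad ⊗ id). -/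
def BraidedHopfAlgebra.IsBraidedCommutative (H : BraidedHopfAlgebra k A) : Prop :=
  lTensor A H.mul ∘ₗ (TensorProduct.assoc k A A A).toLinearMap ∘ₗ
      rTensor A H.braiding ∘ₗ (TensorProduct.assoc k A A A).symm.toLinearMap ∘ₗ
      lTensor A H.ad ∘ₗ H.braiding =
    lTensor A H.mul ∘ₗ (TensorProduct.assoc k A A A).toLinearMap ∘ₗ rTensor A H.ad

namespace BHAProof


variable {k : Type*} [Field k] {M N P M' N' P' : Type*}
  [AddCommGroup M] [Module k M] [AddCommGroup N] [Module k N] [AddCommGroup P] [Module k P]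
  [AddCommGroup M'] [Module k M'] [AddCommGroup N'] [Module k N'] [AddCommGroup P'] [Module k P']

theorem nat1 (f : M →ₗ[k] M') (t : (M ⊗[k] N) ⊗[k] P) :
    TensorProduct.assoc k M' N P (rTensor P (rTensor N f) t) =
      rTensor (N ⊗[k] P) f (TensorProduct.assoc k M N P t) := by
  have := map_map_assoc f (LinearMap.id (M := N)) (LinearMap.id (M := P)) t
  simpa [rTensor, map_id] using this.symm

theorem nat2 (g : N →ₗ[k] N') (t : (M ⊗[k] N) ⊗[k] P) :
    TensorProduct.assoc k M N' P (rTensor P (lTensor M g) t) =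
      lTensor M (rTensor P g) (TensorProduct.assoc k M N P t) := by
  have := map_map_assoc (LinearMap.id (M := M)) g (LinearMap.id (M := P)) t
  simpa [rTensor, lTensor, map_id] using this.symm

theorem nat3 (h : P →ₗ[k] P') (t : (M ⊗[k] N) ⊗[k] P) :
    TensorProduct.assoc k M N P' (lTensor (M ⊗[k] N) h t) =
      lTensor M (lTensor N h) (TensorProduct.assoc k M N P t) := by
  have := map_map_assoc (LinearMap.id (M := M)) (LinearMap.id (M := N)) h t
  simpa [rTensor, lTensor, map_id] using this.symm

theorem nat1' (f : M →ₗ[k] M') (t : M ⊗[k] (N ⊗[k] P)) :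
    (TensorProduct.assoc k M' N P).symm (rTensor (N ⊗[k] P) f t) =
      rTensor P (rTensor N f) ((TensorProduct.assoc k M N P).symm t) := by
  have := map_map_assoc_symm f (LinearMap.id (M := N)) (LinearMap.id (M := P)) t
  simpa [rTensor, map_id] using this.symm

theorem nat2' (g : N →ₗ[k] N') (t : M ⊗[k] (N ⊗[k] P)) :
    (TensorProduct.assoc k M N' P).symm (lTensor M (rTensor P g) t) =
      rTensor P (lTensor M g) ((TensorProduct.assoc k M N P).symm t) := by
  have := map_map_assoc_symm (LinearMap.id (M := M)) g (LinearMap.id (M := P)) t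
  simpa [rTensor, lTensor, map_id] using this.symm

theorem nat3' (h : P →ₗ[k] P') (t : M ⊗[k] (N ⊗[k] P)) :
    (TensorProduct.assoc k M N P').symm (lTensor M (lTensor N h) t) =
      lTensor (M ⊗[k] N) h ((TensorProduct.assoc k M N P).symm t) := by
  have := map_map_assoc_symm (LinearMap.id (M := M)) (LinearMap.id (M := N)) h t
  simpa [rTensor, lTensor, map_id] using this.symm

theorem comm_rl (f : M →ₗ[k] M') (g : N →ₗ[k] N') (t : M ⊗[k] N) :
    rTensor N' f (lTensor M g t) = lTensor M' g (rTensor N f t) := by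
  rw [← comp_apply, ← comp_apply, rTensor_comp_lTensor, lTensor_comp_rTensor]

theorem map_decomp (f : M →ₗ[k] M') (g : N →ₗ[k] N') (t : M ⊗[k] N) :
    map f g t = rTensor N' f (lTensor M g t) := by
  rw [← comp_apply, rTensor_comp_lTensor]

theorem map_decomp' (f : M →ₗ[k] M') (g : N →ₗ[k] N') (t : M ⊗[k] N) :
    map f g t = lTensor M' g (rTensor N f t) := by
  rw [← comp_apply, lTensor_comp_rTensor]

theorem rT_comp (f : N →ₗ[k] P) (g : M →ₗ[k] N) (t : M ⊗[k] M') :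
    rTensor M' (f ∘ₗ g) t = rTensor M' f (rTensor M' g t) := by
  rw [rTensor_comp, comp_apply]

theorem lT_comp (f : N →ₗ[k] P) (g : M →ₗ[k] N) (t : M' ⊗[k] M) :
    lTensor M' (f ∘ₗ g) t = lTensor M' f (lTensor M' g t) := by
  rw [lTensor_comp, comp_apply]

section HopfLemmas
variable {k A : Type*} [Field k] [AddCommGroup A] [Module k A] (H : BraidedHopfAlgebra k A)

theorem aw_coassoc (x : A) :
    rTensor A H.comul (H.comul x) =
      (TensorProduct.assoc k A A A).symm (lTensor A H.comul (H.comul x)) := by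
  have := DFunLike.congr_fun H.comul_coassoc x
  simpa using this

theorem aw_coassoc2 (x : A) :
    lTensor A H.comul (H.comul x) =
      TensorProduct.assoc k A A A (rTensor A H.comul (H.comul x)) := by
  rw [aw_coassoc, LinearEquiv.apply_symm_apply]

theorem aw_counit_r (x : A) : lTensor A H.counit (H.comul x) = x ⊗ₜ[k] (1 : k) := by
  have h := DFunLike.congr_fun H.comul_counit x
  simp only [coe_comp, Function.comp_apply, LinearEquiv.coe_coe, id_coe, id_eq] at h
  have := congrArg (TensorProduct.rid k A).symm h
  simpa [TensorProduct.rid_symm_apply] using this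

theorem aw_antipode_r (x : A) :
    H.mul (lTensor A H.antipode (H.comul x)) = H.unit (H.counit x) := by
  have := DFunLike.congr_fun H.antipode_right x
  simpa using this

theorem aw_antipode_l (x : A) :
    H.mul (rTensor A H.antipode (H.comul x)) = H.unit (H.counit x) := by
  have := DFunLike.congr_fun H.antipode_left x
  simpa using this

theorem aw_antipode_mul (t : A ⊗[k] A) :
    H.antipode (H.mul t) = H.mul (H.braiding (map H.antipode H.antipode t)) := by
  have := DFunLike.congr_fun H.antipode_mul t
  simpa using this

theorem aw_comul_antipode (x : A) :
    H.comul (H.antipode x) = map H.antipode H.antipode (H.braiding (H.comul x)) := by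
  have := DFunLike.congr_fun H.comul_antipode x
  simpa using this

theorem aw_br_l (t : A ⊗[k] A) :
    H.braiding (rTensor A H.antipode t) = lTensor A H.antipode (H.braiding t) := by
  have := DFunLike.congr_fun H.braiding_antipode_left t
  simpa using this

theorem aw_br_r (t : A ⊗[k] A) :
    H.braiding (lTensor A H.antipode t) = rTensor A H.antipode (H.braiding t) := by
  have := DFunLike.congr_fun H.braiding_antipode_right t
  simpa using this

theorem aw_br_r2 (t : A ⊗[k] A) :
    H.braiding (lTensor A (H.antipode ∘ₗ H.antipode) t) =
      rTensor A (H.antipode ∘ₗ H.antipode) (H.braiding t) := by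
  rw [lTensor_comp, comp_apply, aw_br_r, aw_br_r, rTensor_comp, comp_apply]

theorem aw_mapSS (t : A ⊗[k] A) :
    map H.antipode H.antipode (H.braiding t) = H.braiding (map H.antipode H.antipode t) := by
  rw [map_decomp, ← aw_br_l, ← aw_br_r, ← map_decomp']

theorem aw_comul_braiding (t : A ⊗[k] A) :
    lTensor A H.comul (H.braiding t) =
      TensorProduct.assoc k A A A (rTensor A H.braiding
        ((TensorProduct.assoc k A A A).symm (lTensor A H.braiding
          (TensorProduct.assoc k A A A (rTensor A H.comul t))))) := by
  have := DFunLike.congr_fun H.comul_braiding t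
  simpa using this

theorem aw_mul_assoc (t : (A ⊗[k] A) ⊗[k] A) :
    H.mul (rTensor A H.mul t) = H.mul (lTensor A H.mul (TensorProduct.assoc k A A A t)) := by
  have := DFunLike.congr_fun H.mul_assoc' t
  simpa using this

theorem aw_mul_one (a : A) (c : k) : H.mul (a ⊗ₜ[k] H.unit c) = c • a := by
  have := DFunLike.congr_fun H.mul_one' (a ⊗ₜ[k] c)
  simpa using this

theorem aw_counit_unit (c : k) : H.counit (H.unit c) = c := by
  have := DFunLike.congr_fun H.counit_unit c
  simpa using this

theorem aw_comul_unit : H.comul (H.unit 1) = H.unit 1 ⊗ₜ[k] H.unit 1 := by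
  have := DFunLike.congr_fun H.comul_unit (1 : k)
  simpa using this

theorem S_unit (c : k) : H.antipode (H.unit c) = H.unit c := by
  have h1 : H.mul (rTensor A H.antipode (H.comul (H.unit 1))) = H.unit 1 := by
    rw [aw_antipode_l, aw_counit_unit]
  rw [aw_comul_unit] at h1
  simp only [rTensor_tmul] at h1
  have h2 : H.mul (H.antipode (H.unit 1) ⊗ₜ[k] H.unit 1) = H.antipode (H.unit 1) := by
    simpa using aw_mul_one H (H.antipode (H.unit 1)) 1
  have h3 : H.antipode (H.unit 1) = H.unit 1 := by rw [← h2, h1]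
  have h4 : H.unit c = c • H.unit 1 := by
    rw [← map_smul]; norm_num
  rw [h4, map_smul, h3]

theorem L1 (H : BraidedHopfAlgebra k A) (x : A) :
    H.mul (map (H.antipode ∘ₗ H.antipode) H.antipode (H.braiding (H.comul x))) =
      H.unit (H.counit x) := by
  have h0 : map (H.antipode ∘ₗ H.antipode) H.antipode =
      map H.antipode H.antipode ∘ₗ rTensor A H.antipode := by
    rw [show rTensor A H.antipode = map H.antipode LinearMap.id from rfl,
      ← map_comp, comp_id]
  rw [h0, comp_apply, ← aw_br_r, aw_mapSS, ← aw_antipode_mul, aw_antipode_r, S_unit]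

theorem A1core (H : BraidedHopfAlgebra k A) (s : A ⊗[k] (A ⊗[k] A)) :
    lTensor A H.mul (TensorProduct.assoc k A A A (rTensor A
      (rTensor A H.antipode ∘ₗ (lTensor A H.mul ∘ₗ
        (TensorProduct.assoc k A A A).toLinearMap ∘ₗ rTensor A H.ad))
      ((TensorProduct.assoc k A A A).symm s))) =
    rTensor A H.antipode (lTensor A H.mul (TensorProduct.assoc k A A A
      (rTensor A H.ad (lTensor A H.mul s)))) := by
  induction s using TensorProduct.induction_on with
  | zero => simp
  | tmul a w =>
    induction w using TensorProduct.induction_on with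
    | zero => simp
    | tmul p q =>
      simp only [assoc_symm_tmul, rTensor_tmul, lTensor_tmul, comp_apply, assoc_tmul,
        LinearEquiv.coe_coe]
      generalize H.ad a = v
      induction v using TensorProduct.induction_on with
      | zero => simp
      | tmul v1 v2 =>
        simp only [assoc_tmul, lTensor_tmul, rTensor_tmul]
        have h : H.mul (H.mul (v2 ⊗ₜ[k] p) ⊗ₜ[k] q) = H.mul (v2 ⊗ₜ[k] H.mul (p ⊗ₜ[k] q)) := by
          simpa using aw_mul_assoc H ((v2 ⊗ₜ[k] p) ⊗ₜ[k] q)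
        rw [h]
      | add y z hy hz =>
        simp only [add_tmul, map_add, hy, hz]
    | add y z hy hz =>
      simp only [tmul_add, map_add, hy, hz]
  | add y z hy hz =>
    simp only [map_add, hy, hz]

def FF (H : BraidedHopfAlgebra k A) (Phi : A ⊗[k] A →ₗ[k] A ⊗[k] A) : A →ₗ[k] A ⊗[k] A :=
  lTensor A H.mul ∘ₗ (TensorProduct.assoc k A A A).toLinearMap ∘ₗ
    rTensor A (rTensor A H.antipode ∘ₗ Phi) ∘ₗ (TensorProduct.assoc k A A A).symm.toLinearMap ∘ₗ
    lTensor A (map (H.antipode ∘ₗ H.antipode) H.antipode ∘ₗ H.braiding ∘ₗ H.comul) ∘ₗ H.comul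

theorem unitlem (H : BraidedHopfAlgebra k A) (v : A ⊗[k] A) :
    lTensor A H.mul (TensorProduct.assoc k A A A (v ⊗ₜ[k] H.unit 1)) = v := by
  induction v using TensorProduct.induction_on with
  | zero => simp
  | tmul v1 v2 => simp [assoc_tmul, aw_mul_one]
  | add y z hy hz => simp only [add_tmul, map_add, hy, hz]

theorem claimA (H : BraidedHopfAlgebra k A) :
    FF H (lTensor A H.mul ∘ₗ (TensorProduct.assoc k A A A).toLinearMap ∘ₗ rTensor A H.ad) =
      rTensor A H.antipode ∘ₗ H.ad := by
  apply LinearMap.ext; intro x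
  simp only [FF, comp_apply, LinearEquiv.coe_coe]
  rw [A1core, ← lT_comp]
  have L1M : H.mul ∘ₗ (map (H.antipode ∘ₗ H.antipode) H.antipode ∘ₗ H.braiding ∘ₗ H.comul) =
      H.unit ∘ₗ H.counit := by
    apply LinearMap.ext; intro y
    simpa [comp_apply] using L1 H y
  rw [L1M, lT_comp, aw_counit_r]
  simp only [lTensor_tmul, rTensor_tmul]
  rw [unitlem]

theorem adGuts (H : BraidedHopfAlgebra k A) :
    H.ad = (lTensor A H.mul ∘ₗ (TensorProduct.assoc k A A A).toLinearMap ∘ₗ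
      rTensor A H.braiding ∘ₗ (TensorProduct.assoc k A A A).symm.toLinearMap ∘ₗ
      map H.antipode H.comul) ∘ₗ H.comul := rfl

theorem C3CORE (H : BraidedHopfAlgebra k A) (s : A ⊗[k] (A ⊗[k] A)) :
    lTensor A H.mul (TensorProduct.assoc k A A A (rTensor A
      (lTensor A H.mul ∘ₗ (TensorProduct.assoc k A A A).toLinearMap ∘ₗ
        rTensor A H.braiding ∘ₗ (TensorProduct.assoc k A A A).symm.toLinearMap ∘ₗ
        map H.antipode H.comul)
      ((TensorProduct.assoc k A A A).symm s))) =
    lTensor A H.mul (TensorProduct.assoc k A A A (rTensor A H.braiding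
      ((TensorProduct.assoc k A A A).symm (rTensor (A ⊗[k] A) H.antipode
        (lTensor A (lTensor A H.mul ∘ₗ (TensorProduct.assoc k A A A).toLinearMap ∘ₗ
          rTensor A H.comul) s))))) := by
  induction s using TensorProduct.induction_on with
  | zero => simp
  | tmul l1 w =>
    induction w using TensorProduct.induction_on with
    | zero => simp
    | tmul l2 l3 =>
      simp only [assoc_symm_tmul, rTensor_tmul, lTensor_tmul, comp_apply, assoc_tmul,
        LinearEquiv.coe_coe, map_tmul]
      generalize H.comul l2 = v
      induction v using TensorProduct.induction_on with
      | zero => simp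
      | tmul v1 v2 =>
        simp only [assoc_symm_tmul, rTensor_tmul, lTensor_tmul, assoc_tmul, tmul_add]
        generalize H.braiding (H.antipode l1 ⊗ₜ[k] v1) = P
        induction P using TensorProduct.induction_on with
        | zero => simp
        | tmul p1 p2 =>
          simp only [assoc_tmul, lTensor_tmul, rTensor_tmul]
          have h : H.mul (H.mul (p2 ⊗ₜ[k] v2) ⊗ₜ[k] l3) =
              H.mul (p2 ⊗ₜ[k] H.mul (v2 ⊗ₜ[k] l3)) := by
            simpa using aw_mul_assoc H ((p2 ⊗ₜ[k] v2) ⊗ₜ[k] l3)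
          rw [h]
        | add y z hy hz => simp only [add_tmul, map_add, hy, hz]
      | add y z hy hz =>
        simp only [add_tmul, map_add, hy, hz, tmul_add, LinearEquiv.map_add]
    | add y z hy hz => simp only [tmul_add, map_add, hy, hz]
  | add y z hy hz => simp only [map_add, hy, hz]

theorem ridlem (M : A ⊗[k] A) :
    (TensorProduct.assoc k A A k).symm
      (lTensor A (TensorProduct.rid k A).symm.toLinearMap M) = M ⊗ₜ[k] (1 : k) := by
  induction M using TensorProduct.induction_on with
  | zero => simp
  | tmul a b => simp [TensorProduct.rid_symm_apply]
  | add y z hy hz => simp only [map_add, hy, hz, add_tmul]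

theorem j2M (H : BraidedHopfAlgebra k A) :
    ((lTensor A H.mul ∘ₗ (TensorProduct.assoc k A A A).toLinearMap ∘ₗ rTensor A H.comul) ∘ₗ
      lTensor A H.antipode) ∘ₗ H.comul =
    lTensor A H.unit ∘ₗ (TensorProduct.rid k A).symm.toLinearMap := by
  apply LinearMap.ext; intro y
  simp only [comp_apply, LinearEquiv.coe_coe]
  rw [comm_rl, nat3, ← aw_coassoc2, ← lT_comp, ← lT_comp]
  have antR : (H.mul ∘ₗ lTensor A H.antipode) ∘ₗ H.comul = H.unit ∘ₗ H.counit := by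
    apply LinearMap.ext; intro z
    simpa using aw_antipode_r H z
  rw [antR, lT_comp, aw_counit_r]
  simp [TensorProduct.rid_symm_apply]

theorem C3 (H : BraidedHopfAlgebra k A) (h : A) :
    lTensor A H.mul (TensorProduct.assoc k A A A
      (map H.ad H.antipode (H.comul h))) =
    lTensor A H.antipode (H.braiding (H.comul h)) := by
  rw [map_decomp, adGuts, rT_comp, comm_rl, aw_coassoc, ← nat3', C3CORE,
    ← lT_comp, ← lT_comp, j2M, comm_rl, lT_comp, nat3', ridlem]
  simp only [lTensor_tmul, rTensor_tmul]
  rw [unitlem, aw_br_l]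

theorem C2Mmap (H : BraidedHopfAlgebra k A) :
    lTensor A H.mul ∘ₗ (TensorProduct.assoc k A A A).toLinearMap ∘ₗ
      rTensor A (rTensor A H.antipode) ∘ₗ
      rTensor A (lTensor A H.mul ∘ₗ (TensorProduct.assoc k A A A).toLinearMap ∘ₗ
        rTensor A H.braiding ∘ₗ (TensorProduct.assoc k A A A).symm.toLinearMap ∘ₗ
        lTensor A H.ad) ∘ₗ
      (TensorProduct.assoc k A A A).symm.toLinearMap ∘ₗ
      lTensor A (lTensor A H.antipode ∘ₗ H.comul) =
    rTensor A H.antipode ∘ₗ lTensor A H.mul ∘ₗ (TensorProduct.assoc k A A A).toLinearMap ∘ₗ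
      rTensor A H.braiding ∘ₗ (TensorProduct.assoc k A A A).symm.toLinearMap ∘ₗ
      lTensor A (lTensor A H.mul ∘ₗ (TensorProduct.assoc k A A A).toLinearMap ∘ₗ
        map H.ad H.antipode ∘ₗ H.comul) := by
  apply TensorProduct.ext'; intro u h
  simp only [comp_apply, LinearEquiv.coe_coe, lTensor_tmul]
  generalize H.comul h = w
  induction w using TensorProduct.induction_on with
  | zero => simp
  | tmul h1 h2 =>
    simp only [lTensor_tmul, map_tmul, tmul_add, assoc_symm_tmul, rTensor_tmul, assoc_tmul,
      comp_apply, LinearEquiv.coe_coe]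
    generalize H.ad h1 = v
    induction v using TensorProduct.induction_on with
    | zero => simp
    | tmul v1 v2 =>
      simp only [lTensor_tmul, assoc_symm_tmul, rTensor_tmul, assoc_tmul]
      generalize H.braiding (u ⊗ₜ[k] v1) = P
      induction P using TensorProduct.induction_on with
      | zero => simp
      | tmul p1 p2 =>
        simp only [assoc_tmul, lTensor_tmul, rTensor_tmul]
        have hh : H.mul (H.mul (p2 ⊗ₜ[k] v2) ⊗ₜ[k] H.antipode h2) =
            H.mul (p2 ⊗ₜ[k] H.mul (v2 ⊗ₜ[k] H.antipode h2)) := by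
          simpa using aw_mul_assoc H ((p2 ⊗ₜ[k] v2) ⊗ₜ[k] H.antipode h2)
        rw [hh]
      | add y z hy hz => simp only [add_tmul, map_add, hy, hz]
    | add y z hy hz =>
      simp only [add_tmul, map_add, hy, hz, tmul_add, LinearEquiv.map_add]
  | add y z hy hz => simp only [map_add, hy, hz, tmul_add]

theorem C4Mmap (H : BraidedHopfAlgebra k A) :
    rTensor A H.antipode ∘ₗ lTensor A H.mul ∘ₗ (TensorProduct.assoc k A A A).toLinearMap ∘ₗ
      rTensor A H.braiding ∘ₗ (TensorProduct.assoc k A A A).symm.toLinearMap ∘ₗ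
      lTensor A (lTensor A H.antipode) =
    lTensor A H.mul ∘ₗ (TensorProduct.assoc k A A A).toLinearMap ∘ₗ
      rTensor A H.braiding ∘ₗ (TensorProduct.assoc k A A A).symm.toLinearMap ∘ₗ
      lTensor A (map H.antipode H.antipode) := by
  apply TensorProduct.ext'; intro u w
  simp only [comp_apply, LinearEquiv.coe_coe, lTensor_tmul]
  induction w using TensorProduct.induction_on with
  | zero => simp
  | tmul v1 v2 =>
    simp only [lTensor_tmul, map_tmul, assoc_symm_tmul, rTensor_tmul]
    have hbr : H.braiding (u ⊗ₜ[k] H.antipode v1) =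
        rTensor A H.antipode (H.braiding (u ⊗ₜ[k] v1)) := by
      have := aw_br_r H (u ⊗ₜ[k] v1)
      simpa [lTensor_tmul] using this
    rw [hbr]
    generalize H.braiding (u ⊗ₜ[k] v1) = P
    induction P using TensorProduct.induction_on with
    | zero => simp
    | tmul p1 p2 => simp [assoc_tmul]
    | add y z hy hz => simp only [add_tmul, map_add, hy, hz]
  | add y z hy hz =>
    simp only [tmul_add, map_add, hy, hz]

theorem brS2M (H : BraidedHopfAlgebra k A) :
    H.braiding ∘ₗ lTensor A (H.antipode ∘ₗ H.antipode) =
      rTensor A (H.antipode ∘ₗ H.antipode) ∘ₗ H.braiding := by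
  apply LinearMap.ext; intro t
  simpa using aw_br_r2 H t

theorem aw_comul_braiding' (H : BraidedHopfAlgebra k A) (t : A ⊗[k] A) :
    rTensor A H.braiding ((TensorProduct.assoc k A A A).symm (lTensor A H.braiding
      (TensorProduct.assoc k A A A (rTensor A H.comul t)))) =
    (TensorProduct.assoc k A A A).symm (lTensor A H.comul (H.braiding t)) := by
  rw [aw_comul_braiding, LinearEquiv.symm_apply_apply]

theorem C1 (H : BraidedHopfAlgebra k A) (x : A) :
    rTensor A H.braiding ((TensorProduct.assoc k A A A).symm
      (lTensor A (map (H.antipode ∘ₗ H.antipode) H.antipode ∘ₗ H.braiding ∘ₗ H.comul)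
        (H.comul x))) =
    (TensorProduct.assoc k A A A).symm (lTensor A (lTensor A H.antipode)
      (lTensor A H.comul (rTensor A (H.antipode ∘ₗ H.antipode) (H.braiding (H.comul x))))) := by
  rw [lT_comp, lT_comp, aw_coassoc2,
    show map (H.antipode ∘ₗ H.antipode) H.antipode =
      rTensor A (H.antipode ∘ₗ H.antipode) ∘ₗ lTensor A H.antipode from
      (rTensor_comp_lTensor A _ _).symm,
    lT_comp, nat2', nat3', comm_rl, comm_rl, ← rT_comp, brS2M, rT_comp,
    aw_comul_braiding', ← nat1', ← nat3', comm_rl]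

theorem stuffMeq (H : BraidedHopfAlgebra k A) :
    lTensor A H.mul ∘ₗ (TensorProduct.assoc k A A A).toLinearMap ∘ₗ
      map H.ad H.antipode ∘ₗ H.comul =
    lTensor A H.antipode ∘ₗ H.braiding ∘ₗ H.comul := by
  apply LinearMap.ext; intro h
  simpa using C3 H h

theorem claimC (H : BraidedHopfAlgebra k A) :
    FF H (lTensor A H.mul ∘ₗ (TensorProduct.assoc k A A A).toLinearMap ∘ₗ
      rTensor A H.braiding ∘ₗ (TensorProduct.assoc k A A A).symm.toLinearMap ∘ₗ
      lTensor A H.ad ∘ₗ H.braiding) = H.ad ∘ₗ H.antipode := by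
  apply LinearMap.ext; intro x
  simp only [FF, comp_apply, LinearEquiv.coe_coe]
  rw [rT_comp,
    show (lTensor A H.mul ∘ₗ (TensorProduct.assoc k A A A).toLinearMap ∘ₗ
      rTensor A H.braiding ∘ₗ (TensorProduct.assoc k A A A).symm.toLinearMap ∘ₗ
      lTensor A H.ad ∘ₗ H.braiding) =
      (lTensor A H.mul ∘ₗ (TensorProduct.assoc k A A A).toLinearMap ∘ₗ
      rTensor A H.braiding ∘ₗ (TensorProduct.assoc k A A A).symm.toLinearMap ∘ₗ
      lTensor A H.ad) ∘ₗ H.braiding from rfl,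
    rT_comp, C1, ← lT_comp]
  have c2 := DFunLike.congr_fun (C2Mmap H)
    (rTensor A (H.antipode ∘ₗ H.antipode) (H.braiding (H.comul x)))
  simp only [comp_apply, LinearEquiv.coe_coe] at c2
  rw [c2, stuffMeq, lT_comp]
  have c4 := DFunLike.congr_fun (C4Mmap H)
    (lTensor A (H.braiding ∘ₗ H.comul)
      (rTensor A (H.antipode ∘ₗ H.antipode) (H.braiding (H.comul x))))
  simp only [comp_apply, LinearEquiv.coe_coe] at c4
  rw [c4, ← lT_comp, ← map_decomp']
  show _ = (lTensor A H.mul) ((TensorProduct.assoc k A A A)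
    ((rTensor A H.braiding) ((TensorProduct.assoc k A A A).symm
      (map H.antipode H.comul (H.comul (H.antipode x))))))
  rw [aw_comul_antipode,
    show map H.antipode H.comul (map H.antipode H.antipode (H.braiding (H.comul x))) =
      map (H.antipode ∘ₗ H.antipode) (H.comul ∘ₗ H.antipode)
        (H.braiding (H.comul x)) from by rw [← comp_apply, ← map_comp],
    H.comul_antipode]

end HopfLemmas

end BHAProof

/-- if A is braided commutative then the adjoint coaction commutes with the
antipode: ad ∘ S = (S ⊗ id) ∘ ad. -/
theorem ad_antipode (H : BraidedHopfAlgebra k A) (hbc : H.IsBraidedCommutative) :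
    H.ad ∘ₗ H.antipode = rTensor A H.antipode ∘ₗ H.ad := by
  have hbc' :
      lTensor A H.mul ∘ₗ (TensorProduct.assoc k A A A).toLinearMap ∘ₗ
        rTensor A H.braiding ∘ₗ (TensorProduct.assoc k A A A).symm.toLinearMap ∘ₗ
        lTensor A H.ad ∘ₗ H.braiding =
      lTensor A H.mul ∘ₗ (TensorProduct.assoc k A A A).toLinearMap ∘ₗ rTensor A H.ad := hbc
  calc H.ad ∘ₗ H.antipode
      = BHAProof.FF H (lTensor A H.mul ∘ₗ (TensorProduct.assoc k A A A).toLinearMap ∘ₗ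
          rTensor A H.braiding ∘ₗ (TensorProduct.assoc k A A A).symm.toLinearMap ∘ₗ
          lTensor A H.ad ∘ₗ H.braiding) := (BHAProof.claimC H).symm
    _ = BHAProof.FF H (lTensor A H.mul ∘ₗ (TensorProduct.assoc k A A A).toLinearMap ∘ₗ
          rTensor A H.ad) := by rw [hbc']
    _ = rTensor A H.antipode ∘ₗ H.ad := BHAProof.claimA H
end
end

section
/- In BSL(2), the element ad − t·cb is central in the algebra generated by a, b, c, d subject to the six commutation relations (without imposing the determinant relation). -/
noncomputable section

/-- The base field ℂ(t). -/
abbrev Kt : Type := RatFunc ℂ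

/-- The indeterminate t ∈ ℂ(t). -/
abbrev tK : Kt := RatFunc.X

/-- The free algebra on the four generators a, b, c, d. -/
abbrev FreeB : Type := FreeAlgebra Kt (Fin 4)

namespace FreeB

def a : FreeB := FreeAlgebra.ι Kt 0
def b : FreeB := FreeAlgebra.ι Kt 1
def c : FreeB := FreeAlgebra.ι Kt 2
def d : FreeB := FreeAlgebra.ι Kt 3
def t : FreeB := algebraMap Kt FreeB tK
def ti : FreeB := algebraMap Kt FreeB tK⁻¹

/-- The six commutation relations of braided SL(2), without the determinant relation. -/
inductive Rel6 : FreeB → FreeB → Prop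
  | ba : Rel6 (b * a) (t * (a * b))
  | ca : Rel6 (c * a) (ti * (a * c))
  | da : Rel6 (d * a) (a * d)
  | db : Rel6 (d * b) (b * d + (1 - ti) * (a * b))
  | cd : Rel6 (c * d) (d * c + (1 - ti) * (c * a))
  | bc : Rel6 (b * c) (c * b + (1 - ti) * (a * (d - a)))

end FreeB

/-- The algebra on a, b, c, d with the six commutation relations only. -/
abbrev B6 : Type := RingQuot FreeB.Rel6

namespace B6

def a : B6 := RingQuot.mkAlgHom Kt FreeB.Rel6 FreeB.a
def b : B6 := RingQuot.mkAlgHom Kt FreeB.Rel6 FreeB.b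
def c : B6 := RingQuot.mkAlgHom Kt FreeB.Rel6 FreeB.c
def d : B6 := RingQuot.mkAlgHom Kt FreeB.Rel6 FreeB.d
def t : B6 := algebraMap Kt B6 tK

/-- The braided determinant ad − t·cb. -/
def det : B6 := a * d - t * (c * b)

end B6

namespace B6Aux

lemma lin_a {K M : Type} [Field K] [Ring M] [Algebra K M] (u : K) (hu : u ≠ 0)
    (x y : M) :
    (1:K) • (x) - (u * (u * u⁻¹)) • (y) = (1:K) • (x) - u • (y) := by
  match_scalars <;> (field_simp; try ring; try (simp only [inv_pow]; field_simp; ring))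

lemma lin_b {K M : Type} [Field K] [Ring M] [Algebra K M] (u : K) (hu : u ≠ 0)
    (x y z : M) :
    (1:K) • (x) + (1 * 1 - 1 * u⁻¹) • (y) - u • (z) = (1 * u) • (x) - (u • (z) + ((u * 1 - u * u⁻¹) • (x) + (u * (1 * 1) - u * (u⁻¹ * 1) - (u * (1 * u⁻¹) - u * (u⁻¹ * u⁻¹))) • (y)) - (u * 1 - u * u⁻¹) • (y)) := by
  match_scalars <;> (field_simp; try ring; try (simp only [inv_pow]; field_simp; ring))

lemma lin_c {K M : Type} [Field K] [Ring M] [Algebra K M] (u : K) (hu : u ≠ 0)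
    (x y z : M) :
    (1:K) • (x) - (u • (y) + ((u * (1 * u⁻¹) - u * (u⁻¹ * u⁻¹)) • (x) + (u * (1 * (u⁻¹ * (1 * u⁻¹))) - u * (u⁻¹ * (u⁻¹ * (1 * u⁻¹))) - (u * (1 * (u⁻¹ * (u⁻¹ * u⁻¹))) - u * (u⁻¹ * (u⁻¹ * (u⁻¹ * u⁻¹))))) • (z)) - (u * (1 * (u⁻¹ * u⁻¹)) - u * (u⁻¹ * (u⁻¹ * u⁻¹))) • (z)) = (1 * u⁻¹) • (x) + (1 * (u⁻¹ * (1 * u⁻¹)) - 1 * (u⁻¹ * (u⁻¹ * u⁻¹))) • (z) - u • (y) := by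
  match_scalars <;> (field_simp; try ring; try (simp only [inv_pow]; field_simp; ring))

end B6Aux

namespace B6

lemma Rba : b * a = tK • (a * b) := by
  have h := RingQuot.mkAlgHom_rel Kt FreeB.Rel6.ba
  simpa [a, b, FreeB.a, FreeB.b, FreeB.t, Algebra.smul_def, map_mul] using h

lemma Rca : c * a = tK⁻¹ • (a * c) := by
  have h := RingQuot.mkAlgHom_rel Kt FreeB.Rel6.ca
  simpa [a, c, FreeB.ti, Algebra.smul_def, map_mul] using h

lemma Rda : d * a = a * d := by
  have h := RingQuot.mkAlgHom_rel Kt FreeB.Rel6.da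
  simpa [a, d, map_mul] using h

lemma Rdb : d * b = b * d + (1 - tK⁻¹) • (a * b) := by
  have h := RingQuot.mkAlgHom_rel Kt FreeB.Rel6.db
  simpa [a, b, d, FreeB.ti, Algebra.smul_def, map_mul, sub_mul] using h

lemma Rcd : c * d = d * c + (1 - tK⁻¹) • (c * a) := by
  have h := RingQuot.mkAlgHom_rel Kt FreeB.Rel6.cd
  simpa [a, c, d, FreeB.ti, Algebra.smul_def, map_mul, sub_mul] using h

lemma Rbc0 : b * c = c * b + (1 - tK⁻¹) • (a * (d - a)) := by
  have h := RingQuot.mkAlgHom_rel Kt FreeB.Rel6.bc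
  simpa [a, b, c, d, FreeB.ti, Algebra.smul_def, map_mul] using h

lemma Rbc : b * c = c * b + (1 - tK⁻¹) • (a * d) - (1 - tK⁻¹) • (a * a) := by
  rw [Rbc0, mul_sub, smul_sub, add_sub_assoc]

lemma Rba' (x : B6) : b * (a * x) = tK • (a * (b * x)) := by
  rw [← mul_assoc, Rba, smul_mul_assoc, mul_assoc]

lemma Rca' (x : B6) : c * (a * x) = tK⁻¹ • (a * (c * x)) := by
  rw [← mul_assoc, Rca, smul_mul_assoc, mul_assoc]

lemma Rda' (x : B6) : d * (a * x) = a * (d * x) := by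
  rw [← mul_assoc, Rda, mul_assoc]

lemma Rdb' (x : B6) : d * (b * x) = b * (d * x) + (1 - tK⁻¹) • (a * (b * x)) := by
  rw [← mul_assoc, Rdb, add_mul, smul_mul_assoc, mul_assoc, mul_assoc]

lemma Rcd' (x : B6) : c * (d * x) = d * (c * x) + (1 - tK⁻¹) • (c * (a * x)) := by
  rw [← mul_assoc, Rcd, add_mul, smul_mul_assoc, mul_assoc, mul_assoc]

lemma Rbc' (x : B6) :
    b * (c * x) = c * (b * x) + (1 - tK⁻¹) • (a * (d * x)) - (1 - tK⁻¹) • (a * (a * x)) := by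
  rw [← mul_assoc, Rbc, sub_mul, add_mul, smul_mul_assoc, smul_mul_assoc,
    mul_assoc, mul_assoc, mul_assoc]

lemma Dcb : d * (c * b) = c * (b * d) := by
  have h : d * c = c * d - (1 - tK⁻¹) • (c * a) := by
    rw [Rcd, add_sub_cancel_right]
  calc d * (c * b) = (d * c) * b := (mul_assoc _ _ _).symm
    _ = (c * d) * b - (1 - tK⁻¹) • ((c * a) * b) := by
        rw [h, sub_mul, smul_mul_assoc]
    _ = c * (d * b) - (1 - tK⁻¹) • (c * (a * b)) := by rw [mul_assoc, mul_assoc]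
    _ = c * (b * d) := by rw [Rdb, mul_add, mul_smul_comm, add_sub_cancel_right]

lemma det_eq : det = (1 : Kt) • (a * d) - tK • (c * b) := by
  rw [det, t, one_smul, Algebra.smul_def]

lemma comm_a : det * a = a * det := by
  simp only [det_eq, smul_mul_assoc, mul_smul_comm, sub_mul, mul_sub,
    mul_assoc, Rba, Rca, Rda, Rdb, Rcd, Rbc, Rba', Rca', Rda', Rdb', Rcd', Rbc', Dcb,
    mul_add, add_mul, smul_add, smul_sub, smul_smul]
  exact B6Aux.lin_a (M := B6) tK RatFunc.X_ne_zero _ _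

lemma comm_b : det * b = b * det := by
  simp only [det_eq, smul_mul_assoc, mul_smul_comm, sub_mul, mul_sub,
    mul_assoc, Rba, Rca, Rda, Rdb, Rcd, Rbc, Rba', Rca', Rda', Rdb', Rcd', Rbc', Dcb,
    mul_add, add_mul, smul_add, smul_sub, smul_smul]
  exact B6Aux.lin_b (M := B6) tK RatFunc.X_ne_zero _ _ _

lemma comm_c : det * c = c * det := by
  simp only [det_eq, smul_mul_assoc, mul_smul_comm, sub_mul, mul_sub,
    mul_assoc, Rba, Rca, Rda, Rdb, Rcd, Rbc, Rba', Rca', Rda', Rdb', Rcd', Rbc', Dcb,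
    mul_add, add_mul, smul_add, smul_sub, smul_smul]
  exact B6Aux.lin_c (M := B6) tK RatFunc.X_ne_zero _ _ _

lemma comm_d : det * d = d * det := by
  simp only [det_eq, smul_mul_assoc, mul_smul_comm, sub_mul, mul_sub,
    mul_assoc, Rba, Rca, Rda, Rdb, Rcd, Rbc, Rba', Rca', Rda', Rdb', Rcd', Rbc', Dcb,
    mul_add, add_mul, smul_add, smul_sub, smul_smul]

end B6

/-- the braided determinant ad − t·cb is central in the algebra generated by
a, b, c, d subject to the six commutation relations. -/
theorem bsl2_det_central : B6.det ∈ Subring.center B6 := by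
  rw [Subring.mem_center_iff]
  intro g
  obtain ⟨x, rfl⟩ := RingQuot.mkAlgHom_surjective Kt FreeB.Rel6 g
  induction x using FreeAlgebra.induction with
  | grade0 r =>
      rw [AlgHom.commutes]
      exact Algebra.commutes r B6.det
  | grade1 i =>
      fin_cases i
      · exact B6.comm_a.symm
      · exact B6.comm_b.symm
      · exact B6.comm_c.symm
      · exact B6.comm_d.symm
  | mul x y hx hy =>
      rw [map_mul, mul_assoc, hy, ← mul_assoc, hx, mul_assoc]
  | add x y hx hy =>
      rw [map_add, add_mul, mul_add, hx, hy]
end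
end

section
/- For a commutative Hopf algebra A, the quotient A ⊗ A / I, where I is the ideal generated by (τ − id)(Δ(x)) for all x ∈ A (τ the flip), recovers the space of representations of the Hopf link: if A = k^G for a finite group G, then A ⊗ A / I is isomorphic to the algebra of functions on the set {(g, h) ∈ G × G : gh = hg}. -/
noncomputable section

variable (G : Type*) [Group G] [Fintype G] (k : Type*) [Field k]

/-- The coproduct on A = k^G under the identification A ⊗ A ≅ k^(G×G):
Δ(f)(g, h) = f(gh). -/
def DeltaFn (f : G → k) : G × G → k := fun p => f (p.1 * p.2)

/-- The flip τ on k^(G×G) ≅ A ⊗ A. -/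
def flipFn (F : G × G → k) : G × G → k := fun p => F (p.2, p.1)

/-- The Hopf link ideal: the ideal of A ⊗ A ≅ k^(G×G) generated by (τ − id)(Δ(f)). -/
def hopfLinkIdeal : Ideal (G × G → k) :=
  Ideal.span {F | ∃ f : G → k, F = flipFn G k (DeltaFn G k f) - DeltaFn G k f}

/-- for A = k^G, the quotient A ⊗ A / I with I generated by (τ − id)∘Δ is
isomorphic to the algebra of functions on the commuting pairs {(g,h) : gh = hg}. -/
theorem hopfLink_representation_space :
    Nonempty (((G × G → k) ⧸ hopfLinkIdeal G k) ≃+*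
      ({p : G × G // p.1 * p.2 = p.2 * p.1} → k)) := by
  classical
  set res : (G × G → k) →+* ({p : G × G // p.1 * p.2 = p.2 * p.1} → k) :=
    Pi.ringHom (fun p => Pi.evalRingHom (fun _ => k) p.val) with hres
  have hres_apply : ∀ (F : G × G → k) (p : {p : G × G // p.1 * p.2 = p.2 * p.1}),
      res F p = F p.val := fun _ _ => rfl
  have hsurj : Function.Surjective res := by
    intro h
    refine ⟨fun p => if hc : p.1 * p.2 = p.2 * p.1 then h ⟨p, hc⟩ else 0, ?_⟩
    funext p
    rw [hres_apply]
    simp [p.2]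
  have hker : RingHom.ker res = hopfLinkIdeal G k := by
    apply le_antisymm
    · intro F hF
      have hF' : ∀ p : G × G, p.1 * p.2 = p.2 * p.1 → F p = 0 := by
        intro p hp
        have h0 : res F = 0 := RingHom.mem_ker.mp hF
        have := congrFun h0 ⟨p, hp⟩
        simpa [hres_apply] using this
      have hFsum : F = ∑ q : G × G, (fun p => if p = q then F q else 0) := by
        funext p
        simp [Finset.sum_apply]
      rw [hFsum]
      apply Ideal.sum_mem
      intro q _
      by_cases hq : q.1 * q.2 = q.2 * q.1
      · have : (fun p : G × G => if p = q then F q else 0) = 0 := by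
          funext p
          by_cases hp : p = q
          · simp [hp, hF' q hq]
          · simp [hp]
        rw [this]; exact Ideal.zero_mem _
      · have hgen : (flipFn G k (DeltaFn G k (fun x => if x = q.2 * q.1 then (1:k) else 0))
            - DeltaFn G k (fun x => if x = q.2 * q.1 then (1:k) else 0)) ∈ hopfLinkIdeal G k :=
          Ideal.subset_span ⟨_, rfl⟩
        have heq : (fun p : G × G => if p = q then F q else 0) =
            (fun p : G × G => if p = q then F q else 0) *
            (flipFn G k (DeltaFn G k (fun x => if x = q.2 * q.1 then (1:k) else 0))
              - DeltaFn G k (fun x => if x = q.2 * q.1 then (1:k) else 0)) := by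
          funext p
          show _ = (if p = q then F q else 0) * _
          by_cases hp : p = q
          · subst hp
            simp [flipFn, DeltaFn, hq]
          · simp [hp]
        rw [heq]
        exact Ideal.mul_mem_left _ _ hgen
    · rw [hopfLinkIdeal, Ideal.span_le]
      rintro F ⟨f, rfl⟩
      simp only [SetLike.mem_coe, RingHom.mem_ker]
      funext p
      have : p.val.1 * p.val.2 = p.val.2 * p.val.1 := p.2
      simp [hres_apply, flipFn, DeltaFn, this]
  exact ⟨(Ideal.quotEquivOfEq hker.symm).trans (RingHom.quotientKerEquivOfSurjective hsurj)⟩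
end
end
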